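/- arXiv:2507.22388 — 5 statements merged into one kernel-verified Lean document; each statement's English description precedes it below -/
import Mathlib

section
/- Let D = (V, A, ψ) be a balanced multidigraph. Let k be a natural number. For any two vertices s, t ∈ V, the number γ_k(s) of s-convergences of size k equals the number γ_k(t) of t-convergences of size k. -/
/-!
A multidigraph is given by two finite types `V` (vertices) and `A` (arcs)
together with a map `ψ : A → V × V` sending each arc to its (source, target) pair.
For a subset `B ⊆ A`, the induced subdigraph `D⟨B⟩` has vertex set `V` and arc set `B`.
-/

/-- There is an arc of `B` from `v` to `w` in the subdigraph `D⟨B⟩`. -/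
def ArcStep {V A : Type*} (ψ : A → V × V) (B : Set A) (v w : V) : Prop :=
  ∃ a ∈ B, ψ a = (v, w)

/-- `v` can `B`-reach `w`: the subdigraph `D⟨B⟩` has a walk from `v` to `w`. -/
def CanReach {V A : Type*} (ψ : A → V × V) (B : Set A) (v w : V) : Prop :=
  Relation.ReflTransGen (ArcStep ψ B) v w

/-- `B ⊆ A` is acyclic: the subdigraph `D⟨B⟩` has no directed cycles
(equivalently, no closed walk of positive length). -/
def IsAcyclic {V A : Type*} (ψ : A → V × V) (B : Set A) : Prop :=
  ∀ v : V, ¬ Relation.TransGen (ArcStep ψ B) v v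

/-- `B` is an `s`-convergence: `B` is acyclic and `s` is a to-root of `D⟨B⟩`,
i.e. every vertex can `B`-reach `s`. -/
def IsConvergence {V A : Type*} (ψ : A → V × V) (B : Set A) (s : V) : Prop :=
  IsAcyclic ψ B ∧ ∀ v : V, CanReach ψ B v s

/-- `γ_k(s)`: the number of `s`-convergences of size `k`. -/
noncomputable def gammaCount {V A : Type*} (ψ : A → V × V) (k : ℕ) (s : V) : ℕ :=
  {B : Set A | IsConvergence ψ B s ∧ B.ncard = k}.ncard

/-- The attraction basin of `s` with respect to `B`: all vertices that can `B`-reach `s`. -/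
def basin {V A : Type*} (ψ : A → V × V) (B : Set A) (s : V) : Set V :=
  {v : V | CanReach ψ B v s}

/-- `A(P,Q)`: the set of arcs with source in `P` and target in `Q`. -/
def arcsFromTo {V A : Type*} (ψ : A → V × V) (P Q : Set V) : Set A :=
  {a : A | (ψ a).1 ∈ P ∧ (ψ a).2 ∈ Q}

/-- The outdegree of a vertex: the number of arcs with source `v`. -/
noncomputable def outDeg {V A : Type*} (ψ : A → V × V) (v : V) : ℕ :=
  {a : A | (ψ a).1 = v}.ncard

/-- The indegree of a vertex: the number of arcs with target `v`. -/
noncomputable def inDeg {V A : Type*} (ψ : A → V × V) (v : V) : ℕ :=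
  {a : A | (ψ a).2 = v}.ncard

/-- The digraph is balanced: each vertex has outdegree equal to indegree. -/
def IsBalanced {V A : Type*} (ψ : A → V × V) : Prop :=
  ∀ v : V, outDeg ψ v = inDeg ψ v

/-- `U_k`: the set of all acyclic `k`-element subsets `B` of `A` such that each
vertex can `B`-reach `s` or can `B`-reach `t`. -/
def Uset {V A : Type*} (ψ : A → V × V) (s t : V) (k : ℕ) : Set (Set A) :=
  {B : Set A | IsAcyclic ψ B ∧ B.ncard = k ∧ basin ψ B s ∪ basin ψ B t = Set.univ}

/-- `X_i^{P,Q}`: the set of all acyclic `i`-element subsets `B` of `A` with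
`S(B) = P` and `T(B) = Q` (empty for negative `i`). -/
def Xset {V A : Type*} (ψ : A → V × V) (s t : V) (P Q : Set V) (i : ℤ) : Set (Set A) :=
  {B : Set A | IsAcyclic ψ B ∧ (B.ncard : ℤ) = i ∧ basin ψ B s = P ∧ basin ψ B t = Q}

/-- `|X_i^{P,Q}|`. -/
noncomputable def Xcount {V A : Type*} (ψ : A → V × V) (s t : V) (P Q : Set V) (i : ℤ) : ℕ :=
  (Xset ψ s t P Q i).ncard


/-!
Split the acyclic `k`-subsets in which every vertex reaches `s` or `t` into those that are
`s`-convergences and those whose basin `P` of `s` is a proper subset. By balance, exactly as many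
arcs leave `P` as enter it, so we may fix an involution `σ` of the arcs exchanging the two kinds
of cut arcs and fixing all others. Such a subset has no arc entering `P`; replacing its arcs
leaving `P` by their `σ`-images keeps it acyclic, makes `Pᶜ` the basin of `t` and keeps `P`
reaching `s`. This is a size-preserving bijection onto the subsets whose basin of `t` is proper,
with inverse given by the same recipe, so `γ_k(s) = γ_k(t)`.
-/

namespace Relation

variable {α : Type*} {r : α → α → Prop} {W : Set α} {u v : α}

theorem ReflTransGen.mem_of_forall_mem (hW : ∀ a b, r a b → a ∈ W → b ∈ W)
    (h : ReflTransGen r u v) (hu : u ∈ W) : v ∈ W := by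
  induction h with
  | refl => exact hu
  | tail _ hbc ih => exact hW _ _ hbc ih

theorem TransGen.restrict_of_forall_mem (hW : ∀ a b, r a b → a ∈ W → b ∈ W)
    (h : TransGen r u v) (huv : u ∈ W ↔ v ∈ W) :
    TransGen (fun a b => r a b ∧ (a ∈ W ↔ b ∈ W)) u v := by
  induction h with
  | single hab => exact .single ⟨hab, huv⟩
  | @tail b c hub hbc ih =>
    have hbc' : b ∈ W ↔ c ∈ W :=
      ⟨hW b c hbc, fun hc => hub.to_reflTransGen.mem_of_forall_mem hW (huv.2 hc)⟩
    exact .tail (ih (huv.trans hbc'.symm)) ⟨hbc, hbc'⟩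

theorem ReflTransGen.restrict_of_forall_mem (hW : ∀ a b, r a b → a ∈ W → b ∈ W)
    (h : ReflTransGen r u v) (huv : u ∈ W ↔ v ∈ W) :
    ReflTransGen (fun a b => r a b ∧ (a ∈ W ↔ b ∈ W)) u v := by
  rcases reflTransGen_iff_eq_or_transGen.1 h with rfl | h
  · exact .refl
  · exact (h.restrict_of_forall_mem hW huv).to_reflTransGen

end Relation

section

open Set

theorem exists_involutive_mapsTo_of_equiv {α : Type*} {S T : Set α} (hST : Disjoint S T)
    (e : S ≃ T) :
    ∃ σ : α → α, σ.Involutive ∧ (∀ a, a ∉ S → a ∉ T → σ a = a) ∧ MapsTo σ S T ∧ MapsTo σ T S := by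
  classical
  refine ⟨fun a => if ha : a ∈ S then e ⟨a, ha⟩ else if hb : a ∈ T then e.symm ⟨a, hb⟩ else a,
    fun a => ?_, fun a ha hb => by simp [ha, hb], fun a ha => by simp [ha],
    fun a hb => by simp [hST.notMem_of_mem_right hb, hb]⟩
  by_cases ha : a ∈ S
  · simp [ha, hST.notMem_of_mem_right (e ⟨a, ha⟩).2]
  · by_cases hb : a ∈ T <;> simp [ha, hb]

variable {V A : Type*} {ψ : A → V × V}

theorem ncard_arcsFromTo_compl_eq [Fintype V] [Fintype A] (hbal : IsBalanced ψ) (P : Set V) :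
    (arcsFromTo ψ P Pᶜ).ncard = (arcsFromTo ψ Pᶜ P).ncard := by
  classical
  have hfiber (f : A → V) : {a | f a ∈ P}.ncard = ∑ v ∈ P.toFinset, {a | f a = v}.ncard := by
    have := Finset.card_preimage_eq_sum_card_image_eq (f := f) (s := P.toFinset)
      fun _ _ => toFinite _
    rwa [coe_toFinset] at this
  have hsum : {a | (ψ a).1 ∈ P}.ncard = {a | (ψ a).2 ∈ P}.ncard := by
    rw [hfiber (fun a => (ψ a).1), hfiber (fun a => (ψ a).2)]
    exact Finset.sum_congr rfl fun v _ => hbal v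
  rw [← ncard_inter_add_ncard_sdiff_eq_ncard {a | (ψ a).1 ∈ P} {a | (ψ a).2 ∈ P},
    ← ncard_inter_add_ncard_sdiff_eq_ncard {a | (ψ a).2 ∈ P} {a | (ψ a).1 ∈ P},
    inter_comm] at hsum
  convert Nat.add_left_cancel hsum using 2 <;> ext <;> simp [arcsFromTo, and_comm]

theorem mem_basin_self (ψ : A → V × V) (B : Set A) (x : V) : x ∈ basin ψ B x := .refl

theorem basin_subset_basin {B : Set A} {x y : V} (h : y ∈ basin ψ B x) :
    basin ψ B y ⊆ basin ψ B x :=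
  fun _ hv => Relation.ReflTransGen.trans hv h

theorem source_mem_basin {B : Set A} {x : V} {a : A} (ha : a ∈ B)
    (h : (ψ a).2 ∈ basin ψ B x) : (ψ a).1 ∈ basin ψ B x :=
  .head ⟨a, ha, rfl⟩ h

theorem isConvergence_iff {B : Set A} {s : V} :
    IsConvergence ψ B s ↔ IsAcyclic ψ B ∧ basin ψ B s = univ :=
  and_congr_right fun _ => eq_univ_iff_forall.symm

theorem uset_comm (s t : V) (k : ℕ) : Uset ψ s t k = Uset ψ t s k := by
  simp only [Uset, union_comm]

def UsetNonconv (ψ : A → V × V) (x y : V) (k : ℕ) : Set (Set A) :=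
  {B ∈ Uset ψ x y k | basin ψ B x ≠ univ}

theorem gammaCount_eq_ncard_uset_sub [Finite A] (ψ : A → V × V) (k : ℕ) (s t : V) :
    gammaCount ψ k s = (Uset ψ s t k).ncard - (UsetNonconv ψ s t k).ncard := by
  rw [gammaCount, UsetNonconv, ← ncard_sdiff (sep_subset _ _)]
  congr 1
  ext B
  simp only [isConvergence_iff, Uset, mem_ofPred_eq, mem_sdiff]
  constructor
  · rintro ⟨⟨hacyc, hs⟩, hk⟩
    exact ⟨⟨hacyc, hk, by rw [hs, univ_union]⟩, fun h => h.2 hs⟩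
  · rintro ⟨⟨hacyc, hk, hU⟩, hs⟩
    exact ⟨⟨hacyc, not_not.1 fun h => hs ⟨⟨hacyc, hk, hU⟩, h⟩⟩, hk⟩

structure IsCutSwap (ψ : A → V × V) (P : Set V) (σ : A → A) : Prop where
  involutive : σ.Involutive
  apply_eq_self : ∀ a, ((ψ a).1 ∈ P ↔ (ψ a).2 ∈ P) → σ a = a
  mapsTo_out : MapsTo σ (arcsFromTo ψ P Pᶜ) (arcsFromTo ψ Pᶜ P)
  mapsTo_in : MapsTo σ (arcsFromTo ψ Pᶜ P) (arcsFromTo ψ P Pᶜ)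

theorem exists_isCutSwap [Fintype V] [Fintype A] (hbal : IsBalanced ψ) (P : Set V) :
    ∃ σ, IsCutSwap ψ P σ := by
  have hcard : Nat.card (arcsFromTo ψ P Pᶜ) = Nat.card (arcsFromTo ψ Pᶜ P) :=
    ncard_arcsFromTo_compl_eq hbal P
  obtain ⟨e⟩ := Finite.card_eq.1 hcard
  have hdisj : Disjoint (arcsFromTo ψ P Pᶜ) (arcsFromTo ψ Pᶜ P) :=
    disjoint_left.2 fun _ hout hin => hin.1 hout.1
  obtain ⟨σ, hσ, hfix, hout, hin⟩ := exists_involutive_mapsTo_of_equiv hdisj e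
  refine ⟨σ, hσ, fun a ha => hfix a (fun h => h.2 (ha.1 h.1)) (fun h => h.1 (ha.2 h.2)), hout, hin⟩

namespace IsCutSwap

variable {P : Set V} {σ : A → A}

theorem compl (h : IsCutSwap ψ P σ) : IsCutSwap ψ Pᶜ σ where
  involutive := h.involutive
  apply_eq_self a ha := h.apply_eq_self a (not_iff_not.1 ha)
  mapsTo_out := by simpa only [compl_compl] using h.mapsTo_in
  mapsTo_in := by simpa only [compl_compl] using h.mapsTo_out

theorem compl_iff : IsCutSwap ψ Pᶜ σ ↔ IsCutSwap ψ P σ :=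
  ⟨fun h => compl_compl P ▸ h.compl, compl⟩

variable {B : Set A} {u w : V}

theorem arcStep_image_iff (hσ : IsCutSwap ψ P σ) (huw : u ∈ P ↔ w ∈ P) :
    ArcStep ψ (σ '' B) u w ↔ ArcStep ψ B u w := by
  have hmem : ∀ a, ψ a = (u, w) → (a ∈ σ '' B ↔ a ∈ B) := fun a hψ => by
    rw [mem_image_iff_of_inverse hσ.involutive hσ.involutive,
      hσ.apply_eq_self a (by rw [hψ]; exact huw)]
  exact exists_congr fun a => ⟨fun ⟨ha, hψ⟩ => ⟨(hmem a hψ).1 ha, hψ⟩,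
    fun ⟨ha, hψ⟩ => ⟨(hmem a hψ).2 ha, hψ⟩⟩

section NoArcEnters

variable (hσ : IsCutSwap ψ P σ) (hB : ∀ a ∈ B, (ψ a).2 ∈ P → (ψ a).1 ∈ P)
include hσ hB

theorem mem_of_arcStep_image (h : ArcStep ψ (σ '' B) u w) (hu : u ∈ P) : w ∈ P := by
  obtain ⟨_, ⟨b, hb, rfl⟩, hψ⟩ := h
  by_cases hout : b ∈ arcsFromTo ψ P Pᶜ
  · exact absurd (hψ ▸ hu) (hσ.mapsTo_out hout).1
  · have hside : (ψ b).1 ∈ P ↔ (ψ b).2 ∈ P :=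
      ⟨fun h1 => not_not.1 fun h2 => hout ⟨h1, h2⟩, hB b hb⟩
    rw [hσ.apply_eq_self b hside] at hψ
    rw [hψ] at hside
    exact hside.1 hu

theorem isAcyclic_image (hacyc : IsAcyclic ψ B) : IsAcyclic ψ (σ '' B) := fun v hv =>
  hacyc v <| Relation.TransGen.mono (fun _ _ ⟨h, hside⟩ => (hσ.arcStep_image_iff hside).1 h) _ _
    (hv.restrict_of_forall_mem (W := P) (fun _ _ h => hσ.mem_of_arcStep_image hB h) Iff.rfl)

theorem canReach_image (h : CanReach ψ B u w) (huw : u ∈ P ↔ w ∈ P) :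
    CanReach ψ (σ '' B) u w := by
  have hclosed : ∀ v v', ArcStep ψ B v v' → v ∈ Pᶜ → v' ∈ Pᶜ := by
    rintro _ _ ⟨a, ha, hψ⟩ hv hv'
    have hsrc := hB a ha
    rw [hψ] at hsrc
    exact hv (hsrc hv')
  exact Relation.ReflTransGen.mono
    (fun _ _ ⟨h, hside⟩ => (hσ.arcStep_image_iff (not_iff_not.1 hside)).2 h) _ _
    (h.restrict_of_forall_mem hclosed (not_iff_not.2 huw))

end NoArcEnters

variable {x y : V} {k : ℕ}

theorem image_mem_usetNonconv (hσ : IsCutSwap ψ (basin ψ B x) σ)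
    (hB : B ∈ UsetNonconv ψ x y k) :
    σ '' B ∈ UsetNonconv ψ y x k ∧ basin ψ (σ '' B) y = (basin ψ B x)ᶜ := by
  obtain ⟨⟨hacyc, hk, hU⟩, hne⟩ := hB
  set P := basin ψ B x
  have hclosed : ∀ a ∈ B, (ψ a).2 ∈ P → (ψ a).1 ∈ P := fun _ ha => source_mem_basin ha
  have hy : y ∉ P := fun hy =>
    hne (eq_univ_of_univ_subset (hU ▸ union_subset subset_rfl (basin_subset_basin hy)))
  have hbasin_y : basin ψ (σ '' B) y = Pᶜ := by
    ext u
    refine ⟨fun hu huP => hy ?_, fun hu => ?_⟩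
    · exact Relation.ReflTransGen.mem_of_forall_mem
        (fun _ _ h => hσ.mem_of_arcStep_image hclosed h) hu huP
    · have huy : u ∈ basin ψ B y := ((hU ▸ mem_univ u : u ∈ P ∪ _)).resolve_left hu
      exact hσ.canReach_image hclosed huy (iff_of_false hu hy)
  have hbasin_x : P ⊆ basin ψ (σ '' B) x := fun u hu =>
    hσ.canReach_image hclosed hu (iff_of_true hu (mem_basin_self ψ B x))
  refine ⟨⟨⟨hσ.isAcyclic_image hclosed hacyc,
    (ncard_image_of_injective _ hσ.involutive.injective).trans hk, ?_⟩, ?_⟩, hbasin_y⟩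
  · refine eq_univ_of_forall fun u => ?_
    by_cases hu : u ∈ P
    · exact .inr (hbasin_x hu)
    · exact .inl (hbasin_y ▸ hu)
  · rw [hbasin_y, compl_ne_univ]
    exact ⟨x, mem_basin_self ψ B x⟩

end IsCutSwap

theorem ncard_usetNonconv_comm [Fintype V] [Fintype A] (hbal : IsBalanced ψ) (x y : V) (k : ℕ) :
    (UsetNonconv ψ x y k).ncard = (UsetNonconv ψ y x k).ncard := by
  choose σ hσ using exists_isCutSwap hbal
  have hfwd (B) (hB : B ∈ UsetNonconv ψ x y k) := (hσ (basin ψ B x)).image_mem_usetNonconv hB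
  have hbwd (B) (hB : B ∈ UsetNonconv ψ y x k) :=
    (IsCutSwap.compl_iff.1 (hσ (basin ψ B y)ᶜ)).image_mem_usetNonconv hB
  refine (InvOn.bijOn (f' := fun B => σ (basin ψ B y)ᶜ '' B) ⟨fun B hB => ?_, fun B hB => ?_⟩
    (fun B hB => (hfwd B hB).1) (fun B hB => (hbwd B hB).1)).ncard_eq
  · simp only [(hfwd B hB).2, compl_compl, image_image, (hσ _).involutive _, image_id']
  · simp only [(hbwd B hB).2, image_image, (hσ _).involutive _, image_id']

end

/-- For a balanced multidigraph, the number of `s`-convergences of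
size `k` equals the number of `t`-convergences of size `k`, for any vertices `s, t`. -/
theorem gamma_independent_of_root {V A : Type*} [Fintype V] [Fintype A]
    (ψ : A → V × V) (hbal : IsBalanced ψ) (k : ℕ) (s t : V) :
    gammaCount ψ k s = gammaCount ψ k t := by
  rw [gammaCount_eq_ncard_uset_sub ψ k s t, gammaCount_eq_ncard_uset_sub ψ k t s, uset_comm,
    ncard_usetNonconv_comm hbal]
end

section
/- Let D = (V, A, ψ) be a multidigraph and s ∈ V a vertex. Let P and Q be two subsets of V with V = P ⊔ Q. Let E be a subset of A, and let C be a subset of A(P,Q). Then S(E) = P if and only if S(E ∪ C) = P. -/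
/-
Arcs of `C` end in `Q`, outside `P`. Once `S(E) ⊆ P`, no arc of `C` can be the first arc of a walk
to `s` whose remainder lies in `D⟨E ∪ C⟩`, so adding `C` to `E` leaves the basin of `s` unchanged.
This applies to `E` when `S(E) = P`, and also when `S(E ∪ C) = P`, since `S(E) ⊆ S(E ∪ C)`.
-/

lemma basin_mono {V A : Type*} (ψ : A → V × V) (s : V) {E F : Set A} (h : E ⊆ F) :
    basin ψ E s ⊆ basin ψ F s :=
  fun _ hv => Relation.ReflTransGen.mono (fun _ _ ⟨a, ha, hψ⟩ => ⟨a, h ha, hψ⟩) _ _ hv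

lemma basin_union_eq_of_forall_target_notMem {V A : Type*} {ψ : A → V × V} {s : V}
    {E C : Set A} (hC : ∀ a ∈ C, (ψ a).2 ∉ basin ψ E s) :
    basin ψ (E ∪ C) s = basin ψ E s := by
  refine (basin_mono ψ s Set.subset_union_left).antisymm' fun v hv => ?_
  induction hv using Relation.ReflTransGen.head_induction_on with
  | refl => exact Relation.ReflTransGen.refl
  | head hstep _ ih =>
    obtain ⟨a, ha | ha, hψ⟩ := hstep
    · exact Relation.ReflTransGen.head ⟨a, ha, hψ⟩ ih
    · exact absurd (hψ ▸ ih) (hC a ha)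

theorem basin_eq_iff_basin_union_eq_general {V A : Type*}
    (ψ : A → V × V) (s : V) (P Q : Set V)
    (hdisj : P ∩ Q = ∅)
    (E C : Set A) (hC : C ⊆ arcsFromTo ψ P Q) :
    basin ψ E s = P ↔ basin ψ (E ∪ C) s = P := by
  have basin_union_eq (hE : basin ψ E s ⊆ P) : basin ψ (E ∪ C) s = basin ψ E s :=
    basin_union_eq_of_forall_target_notMem fun a ha hs =>
      hdisj.subset ⟨hE hs, (hC ha).2⟩
  constructor
  · intro h
    rw [basin_union_eq h.subset, h]
  · intro h
    rwa [← basin_union_eq ((basin_mono ψ s Set.subset_union_left).trans h.subset)]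

/-- If `V = P ⊔ Q`, `E ⊆ A` and `C ⊆ A(P,Q)`, then
`S(E) = P` if and only if `S(E ∪ C) = P`. -/
theorem basin_eq_iff_basin_union_eq {V A : Type*} [Fintype V] [Fintype A]
    (ψ : A → V × V) (s : V) (P Q : Set V)
    (hunion : P ∪ Q = Set.univ) (hdisj : P ∩ Q = ∅)
    (E C : Set A) (hC : C ⊆ arcsFromTo ψ P Q) :
    basin ψ E s = P ↔ basin ψ (E ∪ C) s = P :=
  basin_eq_iff_basin_union_eq_general ψ s P Q hdisj E C hC
end

section
/- Let D = (V, A, ψ) be a multidigraph, let s, t ∈ V, and let k ∈ ℕ. Then γ_k(s) = |U_k| − Σ |{B ∈ U_k : S(B) = P}|, where the sum ranges over all pairs (P, Q) of nonempty subsets of V with V = P ⊔ Q. -/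
/-- `γ_k(s) = |U_k| − Σ |{B ∈ U_k : S(B) = P}|`, the sum ranging over
all pairs `(P, Q)` of nonempty subsets of `V` with `V = P ⊔ Q`. -/
theorem gamma_s_eq_card_U_sub_sum {V A : Type*} [Fintype V] [Fintype A]
    (ψ : A → V × V) (s t : V) (k : ℕ) :
    (gammaCount ψ k s : ℤ) =
      ((Uset ψ s t k).ncard : ℤ) -
        ∑ᶠ (P : Set V) (Q : Set V)
          (_ : P.Nonempty ∧ Q.Nonempty ∧ P ∪ Q = Set.univ ∧ P ∩ Q = ∅),
          ({B ∈ Uset ψ s t k | basin ψ B s = P}.ncard : ℤ) := by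
  classical
  haveI : Fintype (Set V) := Fintype.ofFinite _
  haveI : Fintype (Set A) := Fintype.ofFinite _
  set c : Set V → ℤ := fun P => ({B ∈ Uset ψ s t k | basin ψ B s = P}.ncard : ℤ) with hc
  -- Step A: collapse the finsum
  have hsum : (∑ᶠ (P : Set V) (Q : Set V)
        (_ : P.Nonempty ∧ Q.Nonempty ∧ P ∪ Q = Set.univ ∧ P ∩ Q = ∅), c P)
      = ∑ P : Set V, if (P.Nonempty ∧ Pᶜ.Nonempty) then c P else 0 := by
    rw [finsum_eq_sum_of_fintype]
    refine Finset.sum_congr rfl fun P _ => ?_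
    rw [finsum_eq_sum_of_fintype]
    have hcond : ∀ Q : Set V,
        (P.Nonempty ∧ Q.Nonempty ∧ P ∪ Q = Set.univ ∧ P ∩ Q = ∅) ↔
          ((P.Nonempty ∧ Pᶜ.Nonempty) ∧ Q = Pᶜ) := by
      intro Q
      constructor
      · rintro ⟨hP, hQ, hu, hi⟩
        have hQc : Q = Pᶜ := by
          ext v
          constructor
          · intro hv hvP
            have : v ∈ P ∩ Q := ⟨hvP, hv⟩
            rw [hi] at this
            exact this
          · intro hv
            have : v ∈ P ∪ Q := hu ▸ Set.mem_univ v
            rcases this with h | h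
            · exact absurd h hv
            · exact h
        exact ⟨⟨hP, hQc ▸ hQ⟩, hQc⟩
      · rintro ⟨⟨hP, hPc⟩, rfl⟩
        exact ⟨hP, hPc, Set.union_compl_self P, Set.inter_compl_self P⟩
    calc ∑ Q : Set V, ∑ᶠ (_ : P.Nonempty ∧ Q.Nonempty ∧ P ∪ Q = Set.univ ∧ P ∩ Q = ∅), c P
        = ∑ Q : Set V, if ((P.Nonempty ∧ Pᶜ.Nonempty) ∧ Q = Pᶜ) then c P else 0 := by
          refine Finset.sum_congr rfl fun Q _ => ?_
          rw [finsum_eq_if, if_congr (hcond Q) rfl rfl]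
      _ = if (P.Nonempty ∧ Pᶜ.Nonempty) then c P else 0 := by
          by_cases h : P.Nonempty ∧ Pᶜ.Nonempty
          · simp [h]
          · simp [h]
  -- Step B: γ_k is the fiber at P = univ
  have hgamma : (gammaCount ψ k s : ℤ) = c Set.univ := by
    have hset : {B : Set A | IsConvergence ψ B s ∧ B.ncard = k}
        = {B ∈ Uset ψ s t k | basin ψ B s = Set.univ} := by
      ext B
      simp only [Set.mem_setOf_eq, Uset, IsConvergence]
      constructor
      · rintro ⟨⟨hac, hall⟩, hk⟩
        have hb : basin ψ B s = Set.univ := Set.eq_univ_of_forall fun v => hall v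
        exact ⟨⟨hac, hk, by rw [hb]; simp⟩, hb⟩
      · rintro ⟨⟨hac, hk, _⟩, hb⟩
        exact ⟨⟨hac, fun v => Set.eq_univ_iff_forall.mp hb v⟩, hk⟩
    simp only [hc, gammaCount, hset]
  -- Step C: fiberwise count of U_k
  have hU : ((Uset ψ s t k).ncard : ℤ) = ∑ P : Set V, c P := by
    have h3 : ∀ P : Set V, ({B ∈ Uset ψ s t k | basin ψ B s = P}).ncard
        = ((Uset ψ s t k).toFinset.filter (fun B => basin ψ B s = P)).card := by
      intro P
      rw [Set.ncard_eq_toFinset_card']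
      congr 1
      ext B
      simp [Set.mem_toFinset]
    have h2 : (Uset ψ s t k).toFinset.card
        = ∑ P : Set V, ((Uset ψ s t k).toFinset.filter (fun B => basin ψ B s = P)).card :=
      Finset.card_eq_sum_card_fiberwise (fun B _ => Finset.mem_univ _)
    rw [Set.ncard_eq_toFinset_card', h2]
    push_cast
    exact Finset.sum_congr rfl fun P _ => by simp only [hc, h3 P]
  -- Step D: the empty fiber vanishes
  have hempty : c ∅ = 0 := by
    have hes : {B ∈ Uset ψ s t k | basin ψ B s = (∅ : Set V)} = ∅ := by
      ext B
      simp only [Set.mem_setOf_eq, Set.mem_empty_iff_false, iff_false, not_and]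
      intro _ hb
      have hs : s ∈ basin ψ B s := Relation.ReflTransGen.refl
      rw [hb] at hs
      exact hs
    simp [hc, hes]
  -- Step E: the conditional sum equals the sum over P ≠ univ
  have hfinal : ∑ P : Set V, (if (P.Nonempty ∧ Pᶜ.Nonempty) then c P else 0)
      = ∑ P ∈ Finset.univ.erase Set.univ, c P := by
    rw [← Finset.sum_erase (f := fun P => if (P.Nonempty ∧ Pᶜ.Nonempty) then c P else 0)
      Finset.univ (a := Set.univ) (by simp)]
    refine Finset.sum_congr rfl fun P hP => ?_
    have hPne : P ≠ Set.univ := (Finset.mem_erase.mp hP).1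
    by_cases h0 : P = ∅
    · subst h0; simp [hempty]
    · rw [if_pos ⟨Set.nonempty_iff_ne_empty.mpr h0, Set.nonempty_compl.mpr hPne⟩]
  rw [hsum, hgamma, hfinal, hU,
    ← Finset.sum_erase_add Finset.univ c (Finset.mem_univ Set.univ)]
  ring
end

section
/- Let D = (V, A, ψ) be a multidigraph, let s, t ∈ V, and let k ∈ ℕ. Then γ_k(t) = |U_k| − Σ |{B ∈ U_k : T(B) = Q}|, where the sum ranges over all pairs (P, Q) of nonempty subsets of V with V = P ⊔ Q. -/
/-- `γ_k(t) = |U_k| − Σ |{B ∈ U_k : T(B) = Q}|`, the sum ranging over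
all pairs `(P, Q)` of nonempty subsets of `V` with `V = P ⊔ Q`. -/
theorem gamma_t_eq_card_U_sub_sum {V A : Type*} [Fintype V] [Fintype A]
    (ψ : A → V × V) (s t : V) (k : ℕ) :
    (gammaCount ψ k t : ℤ) =
      ((Uset ψ s t k).ncard : ℤ) -
        ∑ᶠ (P : Set V) (Q : Set V)
          (_ : P.Nonempty ∧ Q.Nonempty ∧ P ∪ Q = Set.univ ∧ P ∩ Q = ∅),
          ({B ∈ Uset ψ s t k | basin ψ B t = Q}.ncard : ℤ) := by
  classical
  set W : Set V → Set (Set A) := fun Q => {B ∈ Uset ψ s t k | basin ψ B t = Q} with hW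
  set F : Set V → ℤ := fun Q => ((W Q).ncard : ℤ) with hFdef
  -- collapse the finsum
  have hsum : (∑ᶠ (P : Set V) (Q : Set V)
      (_ : P.Nonempty ∧ Q.Nonempty ∧ P ∪ Q = Set.univ ∧ P ∩ Q = ∅),
        ({B ∈ Uset ψ s t k | basin ψ B t = Q}.ncard : ℤ))
      = ∑ Q : Set V, if Qᶜ.Nonempty ∧ Q.Nonempty then F Q else 0 := by
    rw [finsum_eq_sum_of_fintype]
    have h1 : ∀ P : Set V, (∑ᶠ (Q : Set V)
        (_ : P.Nonempty ∧ Q.Nonempty ∧ P ∪ Q = Set.univ ∧ P ∩ Q = ∅),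
          ({B ∈ Uset ψ s t k | basin ψ B t = Q}.ncard : ℤ))
        = if P.Nonempty ∧ Pᶜ.Nonempty then F Pᶜ else 0 := by
      intro P
      rw [finsum_eq_sum_of_fintype]
      have he : ∀ Q : Set V,
          (∑ᶠ (_ : P.Nonempty ∧ Q.Nonempty ∧ P ∪ Q = Set.univ ∧ P ∩ Q = ∅),
            ({B ∈ Uset ψ s t k | basin ψ B t = Q}.ncard : ℤ))
          = if (P.Nonempty ∧ Q.Nonempty ∧ P ∪ Q = Set.univ ∧ P ∩ Q = ∅) then F Q else 0 :=
        fun Q => finsum_eq_if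
      rw [Finset.sum_congr rfl (fun Q _ => he Q)]
      rw [Finset.sum_eq_single Pᶜ]
      · simp [Set.union_compl_self, Set.inter_compl_self]
      · intro Q _ hQ
        rw [if_neg]
        rintro ⟨hP, hQne, hu, hi⟩
        apply hQ
        ext x
        simp only [Set.mem_compl_iff]
        constructor
        · intro hx hxP
          have hmem : x ∈ P ∩ Q := ⟨hxP, hx⟩
          rw [hi] at hmem
          exact hmem
        · intro hx
          have hmem : x ∈ P ∪ Q := by rw [hu]; exact Set.mem_univ x
          exact hmem.resolve_left hx
      · intro h
        exact absurd (Finset.mem_univ _) h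
    rw [Finset.sum_congr rfl (fun P _ => h1 P)]
    refine Fintype.sum_bijective compl (Function.Involutive.bijective compl_compl) _ _ ?_
    intro P
    simp [compl_compl]
  -- t always lies in its own basin
  have ht : ∀ B : Set A, t ∈ basin ψ B t := fun B => Relation.ReflTransGen.refl
  -- empty fibers
  have hW0 : ∀ Q : Set V, ¬ Q.Nonempty → (W Q).ncard = 0 := by
    intro Q hQ
    have : W Q = ∅ := by
      ext B
      simp only [hW, Set.mem_setOf_eq, Set.mem_empty_iff_false, iff_false, not_and]
      intro _ hb
      exact hQ ⟨t, hb ▸ ht B⟩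
    simp [this]
  -- γ is the fiber at univ
  have hgamma : gammaCount ψ k t = (W Set.univ).ncard := by
    unfold gammaCount
    congr 1
    ext B
    simp only [hW, Set.mem_setOf_eq, IsConvergence, Uset]
    constructor
    · rintro ⟨⟨hac, hall⟩, hcard⟩
      have hb : basin ψ B t = Set.univ := Set.eq_univ_of_forall (fun v => hall v)
      exact ⟨⟨hac, hcard, by rw [hb]; exact Set.union_univ _⟩, hb⟩
    · rintro ⟨⟨hac, hcard, _⟩, hb⟩
      exact ⟨⟨hac, fun v => by
        have : v ∈ basin ψ B t := by rw [hb]; exact Set.mem_univ v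
        exact this⟩, hcard⟩
  -- partition of U_k by the fiber of basin t
  have hpart : (Uset ψ s t k).ncard = ∑ Q : Set V, (W Q).ncard := by
    rw [Set.ncard_eq_toFinset_card' (Uset ψ s t k)]
    rw [Finset.card_eq_sum_card_fiberwise
      (f := fun B => basin ψ B t) (t := Finset.univ) (fun _ _ => Finset.mem_univ _)]
    refine Finset.sum_congr rfl (fun Q _ => ?_)
    rw [Set.ncard_eq_toFinset_card' (W Q)]
    congr 1
    ext B
    simp [hW]
  -- termwise identity
  have hterm : ∀ Q : Set V, ((W Q).ncard : ℤ) =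
      (if Q = Set.univ then ((W Set.univ).ncard : ℤ) else 0)
        + (if Qᶜ.Nonempty ∧ Q.Nonempty then F Q else 0) := by
    intro Q
    by_cases h1 : Q = Set.univ
    · subst h1
      simp [Set.not_nonempty_empty]
    · rw [if_neg h1]
      by_cases h2 : Q.Nonempty
      · rw [if_pos ⟨Set.nonempty_compl.mpr h1, h2⟩]
        simp [hFdef]
      · rw [if_neg (fun h => h2 h.2), hW0 Q h2]
        simp
  rw [hsum, hgamma, hpart]
  push_cast
  rw [Finset.sum_congr rfl (fun Q _ => hterm Q), Finset.sum_add_distrib,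
    Finset.sum_ite_eq' Finset.univ Set.univ (fun _ => ((W Set.univ).ncard : ℤ))]
  simp
end

section
/- Let D = (V, A, ψ) be a multidigraph, let s, t ∈ V, and let k ∈ ℕ. Let P and Q be two nonempty subsets of V with V = P ⊔ Q, and let C be a subset of A(P,Q). If B ∈ U_k satisfies S(B) = P and B ∩ A(P,Q) = C, then B \ C is an acyclic (k − |C|)-element subset of A satisfying S(B \ C) = P and T(B \ C) = Q. -/
/-!
Since `S(B) = P` is closed under reversed `B`-arcs and `Q = V \ P` under `B`-arcs, a `B`-walk
into `s` has all its arcs inside `P`, and a `B`-walk out of a vertex of `Q` has all its arcs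
inside `Q`; neither uses an arc of `C ⊆ A(P,Q)`, so `S` and the `Q`-part of `T` survive the
removal of `C`. Conversely `B \ C` has no arc from `P` to `Q`, so no vertex of `P` can
`(B \ C)`-reach `t ∈ Q`.
-/

section

variable {V A : Type*} {ψ : A → V × V}

theorem ArcStep.mono {B B' : Set A} {v w : V} (hBB' : B ⊆ B') (h : ArcStep ψ B v w) :
    ArcStep ψ B' v w :=
  let ⟨a, ha, hψ⟩ := h
  ⟨a, hBB' ha, hψ⟩

namespace CanReach

variable {B B' : Set A} {u v w : V}

theorem mono (hBB' : B ⊆ B') (h : CanReach ψ B v w) : CanReach ψ B' v w :=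
  Relation.ReflTransGen.mono (fun _ _ => ArcStep.mono hBB') v w h

theorem trans (huv : CanReach ψ B u v) (hvw : CanReach ψ B v w) : CanReach ψ B u w :=
  Relation.ReflTransGen.trans huv hvw

theorem restrict_between (h : CanReach ψ B v w) :
    CanReach ψ {a ∈ B | CanReach ψ B v (ψ a).1 ∧ CanReach ψ B (ψ a).2 w} v w := by
  suffices key : ∀ {u}, CanReach ψ B v u → CanReach ψ B u w →
      CanReach ψ {a ∈ B | CanReach ψ B v (ψ a).1 ∧ CanReach ψ B (ψ a).2 w} v u from
    key h .refl
  intro u hvu huw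
  induction hvu with
  | refl => exact .refl
  | @tail x y _ hxy ih =>
    obtain ⟨a, haB, hψ⟩ := hxy
    have hyw : CanReach ψ B y w := huw
    refine .tail (ih (.head ⟨a, haB, hψ⟩ hyw)) ⟨a, ⟨haB, ?_, ?_⟩, hψ⟩
    · rwa [hψ]
    · rwa [hψ]

theorem mem_of_closed {X : Set V} (hX : ∀ a ∈ B, (ψ a).1 ∈ X → (ψ a).2 ∈ X)
    (h : CanReach ψ B v w) (hv : v ∈ X) : w ∈ X := by
  induction h with
  | refl => exact hv
  | tail _ hxy ih =>
    obtain ⟨a, haB, hψ⟩ := hxy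
    have := hX a haB (by rwa [hψ])
    rwa [hψ] at this

end CanReach

theorem IsAcyclic.mono {B B' : Set A} (hBB' : B ⊆ B') (h : IsAcyclic ψ B') : IsAcyclic ψ B :=
  fun v hv => h v (Relation.TransGen.mono (fun _ _ => ArcStep.mono hBB') v v hv)

section RemoveArcs

variable {B C : Set A} {s v w : V}

theorem basin_sdiff_eq (hC : ∀ a ∈ C, (ψ a).2 ∉ basin ψ B s) :
    basin ψ (B \ C) s = basin ψ B s := by
  ext v
  refine ⟨CanReach.mono Set.sdiff_subset, fun hv => ?_⟩
  exact hv.restrict_between.mono fun a ha => ⟨ha.1, fun haC => hC a haC ha.2.2⟩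

theorem canReach_sdiff_of_notMem_basin (hC : ∀ a ∈ C, (ψ a).1 ∈ basin ψ B s)
    (hv : v ∉ basin ψ B s) (h : CanReach ψ B v w) : CanReach ψ (B \ C) v w :=
  h.restrict_between.mono fun a ha => ⟨ha.1, fun haC => hv (ha.2.1.trans (hC a haC))⟩

end RemoveArcs

end

theorem sdiff_mem_X_general {V A : Type*} [Fintype A]
    (ψ : A → V × V) (s t : V) (k : ℕ)
    (P Q : Set V) (hQ : Q.Nonempty)
    (hunion : P ∪ Q = Set.univ) (hdisj : P ∩ Q = ∅)
    (C : Set A) (hC : C ⊆ arcsFromTo ψ P Q)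
    (B : Set A) (hB : B ∈ Uset ψ s t k) (hSB : basin ψ B s = P)
    (hBC : B ∩ arcsFromTo ψ P Q = C) :
    IsAcyclic ψ (B \ C) ∧ (B \ C).ncard = k - C.ncard ∧
      basin ψ (B \ C) s = P ∧ basin ψ (B \ C) t = Q := by
  obtain ⟨hac, hcard, hcover⟩ := hB
  have hQP : Q = Pᶜ := (IsCompl.compl_eq
    ⟨Set.disjoint_iff_inter_eq_empty.2 hdisj, codisjoint_iff.2 hunion⟩).symm
  subst hQP hSB
  have hCB : C ⊆ B := hBC ▸ Set.inter_subset_left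
  have hreach_t : ∀ v ∉ basin ψ B s, CanReach ψ B v t := fun v hv =>
    ((Set.eq_univ_iff_forall.1 hcover) v).resolve_left hv
  have ht : t ∉ basin ψ B s := by
    obtain ⟨v, hv⟩ := hQ
    exact fun hts => hv ((hreach_t v hv).trans hts)
  refine ⟨hac.mono Set.sdiff_subset, by rw [Set.ncard_sdiff hCB, hcard],
    basin_sdiff_eq fun a ha => (hC ha).2, Set.ext fun v => ⟨fun hvt hv => ?_, fun hv => ?_⟩⟩
  · refine ht (hvt.mem_of_closed (fun a ha has => ?_) hv)
    by_contra hat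
    exact ha.2 (hBC ▸ ⟨ha.1, has, hat⟩)
  · exact canReach_sdiff_of_notMem_basin (fun a ha => (hC ha).1) hv (hreach_t v hv)

/-- If `B ∈ U_k` satisfies `S(B) = P` and `B ∩ A(P,Q) = C`, then
`B \ C` is an acyclic `(k − |C|)`-element subset of `A` with `S(B \ C) = P` and
`T(B \ C) = Q`. -/
theorem sdiff_mem_X {V A : Type*} [Fintype V] [Fintype A]
    (ψ : A → V × V) (s t : V) (k : ℕ)
    (P Q : Set V) (hP : P.Nonempty) (hQ : Q.Nonempty)
    (hunion : P ∪ Q = Set.univ) (hdisj : P ∩ Q = ∅)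
    (C : Set A) (hC : C ⊆ arcsFromTo ψ P Q)
    (B : Set A) (hB : B ∈ Uset ψ s t k) (hSB : basin ψ B s = P)
    (hBC : B ∩ arcsFromTo ψ P Q = C) :
    IsAcyclic ψ (B \ C) ∧ (B \ C).ncard = k - C.ncard ∧
      basin ψ (B \ C) s = P ∧ basin ψ (B \ C) t = Q :=
  sdiff_mem_X_general ψ s t k P Q hQ hunion hdisj C hC B hB hSB hBC
end
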